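/- Chernoff-type tail bound for the energy distribution of a coherent thermal state: with M(t) as its moment-generating function and t' = log(1 + 1/(α + n_β)), one has Σ_{l ≥ T} ρ_{l,l} ≤ e^{-t'T} M(t') = ((α+n_β)/α) exp[α - T log(1 + 1/(α+n_β))]; in particular, for T = α² + R√(1+2n_β)α and α → ∞ the right tail weight is O(exp(n_β + 1/2 - √(1+2n_β)·R)). -/

import Mathlib

open Filter

/-- The `l`-th (ordinary) Laguerre polynomial `L_l(z) = Σ_{i=0}^l (-1)^i C(l,l-i) z^i/i!`. -/
noncomputable def laguerre (l : ℕ) (z : ℝ) : ℝ :=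
  ∑ i ∈ Finset.range (l + 1), (-1 : ℝ) ^ i * (l.choose (l - i)) * z ^ i / (Nat.factorial i : ℝ)

/-- Diagonal Fock-basis matrix element `ρ_{l,l}` of the coherent thermal state with real
displacement `α` and mean thermal occupation `n_β`. -/
noncomputable def rhoDiag (nβ α : ℝ) (l : ℕ) : ℝ :=
  Real.exp (-α ^ 2 / (nβ + 1)) / (nβ + 1) * (nβ / (nβ + 1)) ^ l *
    laguerre l (-α ^ 2 / (nβ * (nβ + 1)))

/-!
The terms of `L_l(-w)` are nonnegative for `w ≥ 0`, so `ρ_{l,l} = c s^l L_l(-w)`, with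
`s = n_β/(n_β+1)` and `w = α²/(n_β(n_β+1))`, is a nonnegative sequence. Summing the double series
`Σ_{i,k} C(i+k,i) (-x)^i/i! s^(i+k)` first over `k` and then along antidiagonals gives the Laguerre
generating function `Σ_l L_l(x) s^l = e^(-xs/(1-s))/(1-s)`, hence the closed form of
`M(t) = Σ_l ρ_{l,l} e^(tl)`. At `e^t' = 1 + 1/(α+n_β)` it equals `((α+n_β)/α) e^α`, and the Chernoff
bound `Σ_{l≥T} ρ_{l,l} ≤ e^(-t'T) M(t')` is the first claim. For the second,
`log(1+1/u) = 1/u - 1/(2u²) + O(u⁻³)` makes the exponent `α - T t'` converge to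
`n_β + 1/2 - √(1+2n_β) R`, so the bound converges to `exp` of that limit.
-/

open Real Topology Finset Nat Asymptotics

theorem laguerre_eq_sum (l : ℕ) (x : ℝ) :
    laguerre l x = ∑ i ∈ range (l + 1), (l.choose i : ℝ) * (-x) ^ i / i ! := by
  refine sum_congr rfl fun i hi => ?_
  rw [Nat.choose_symm (Nat.lt_succ_iff.mp (mem_range.mp hi)), neg_pow]
  ring

theorem laguerre_nonneg_of_nonpos {x : ℝ} (hx : x ≤ 0) (l : ℕ) : 0 ≤ laguerre l x := by
  have : 0 ≤ -x := neg_nonneg.mpr hx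
  rw [laguerre_eq_sum]
  positivity

theorem HasSum.sum_antidiagonal {M A : Type*} [AddCommMonoid M] [TopologicalSpace M]
    [ContinuousAdd M] [RegularSpace M] [AddCommMonoid A] [HasAntidiagonal A]
    {f : A × A → M} {a : M} (h : HasSum f a) :
    HasSum (fun n => ∑ p ∈ antidiagonal n, f p) a :=
  (HasAntidiagonal.sigmaAntidiagonalEquivProd.hasSum_iff.mpr h).sigma fun n => by
    rw [← sum_finset_coe]
    exact hasSum_fintype _

noncomputable def laguerreDoubleTerm (y s : ℝ) (p : ℕ × ℕ) : ℝ :=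
  ((p.1 + p.2).choose p.1 : ℝ) * (y ^ p.1 / p.1 !) * s ^ (p.1 + p.2)

theorem hasSum_laguerreDoubleTerm_fiber (y : ℝ) {s : ℝ} (hs : |s| < 1) (i : ℕ) :
    HasSum (fun k => laguerreDoubleTerm y s (i, k)) ((y * s / (1 - s)) ^ i / i ! / (1 - s)) := by
  have hs₁ : 1 - s ≠ 0 := by linarith [le_abs_self s]
  have h := (hasSum_choose_mul_geometric_of_norm_lt_one i hs).mul_left (y ^ i / i ! * s ^ i)
  rw [show y ^ i / i ! * s ^ i * (1 / (1 - s) ^ (i + 1))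
      = (y * s / (1 - s)) ^ i / i ! / (1 - s) by rw [div_pow, mul_pow]; field_simp; ring] at h
  refine h.congr_fun fun k => ?_
  rw [laguerreDoubleTerm, add_comm i k, pow_add]
  ring

theorem summable_laguerreDoubleTerm (y : ℝ) {s : ℝ} (hs : |s| < 1) :
    Summable (laguerreDoubleTerm y s) := by
  have hnonneg : 0 ≤ laguerreDoubleTerm |y| |s| := fun p => by
    simp only [laguerreDoubleTerm, Pi.zero_apply]
    positivity
  have hfib := hasSum_laguerreDoubleTerm_fiber |y| (s := |s|) (by rwa [abs_abs])
  have habs : Summable (laguerreDoubleTerm |y| |s|) := by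
    refine (summable_prod_of_nonneg hnonneg).mpr ⟨fun i => (hfib i).summable, ?_⟩
    exact ((NormedSpace.expSeries_div_hasSum_exp (|y| * |s| / (1 - |s|))).summable.div_const
      (1 - |s|)).congr fun i => (hfib i).tsum_eq.symm
  refine Summable.of_norm (habs.congr fun p => ?_)
  simp only [laguerreDoubleTerm, norm_mul, norm_div, norm_pow, Real.norm_eq_abs, Nat.abs_cast]

theorem hasSum_laguerreDoubleTerm (y : ℝ) {s : ℝ} (hs : |s| < 1) :
    HasSum (laguerreDoubleTerm y s) (exp (y * s / (1 - s)) / (1 - s)) := by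
  have hexp : HasSum (fun i => (y * s / (1 - s)) ^ i / i ! / (1 - s))
      (exp (y * s / (1 - s)) / (1 - s)) := by
    rw [exp_eq_exp_ℝ]
    exact (NormedSpace.expSeries_div_hasSum_exp _).div_const _
  have hS := (summable_laguerreDoubleTerm y hs).hasSum
  rwa [hexp.unique (hS.prod_fiberwise (hasSum_laguerreDoubleTerm_fiber y hs))]

theorem sum_antidiagonal_laguerreDoubleTerm (y s : ℝ) (l : ℕ) :
    ∑ p ∈ antidiagonal l, laguerreDoubleTerm y s p = laguerre l (-y) * s ^ l := by
  rw [Nat.sum_antidiagonal_eq_sum_range_succ_mk, laguerre_eq_sum, neg_neg, sum_mul]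
  refine sum_congr rfl fun i hi => ?_
  rw [laguerreDoubleTerm, Nat.add_sub_cancel' (Nat.lt_succ_iff.mp (mem_range.mp hi))]
  ring

theorem hasSum_laguerre_mul_pow (x : ℝ) {s : ℝ} (hs : |s| < 1) :
    HasSum (fun l => laguerre l x * s ^ l) (exp (-x * s / (1 - s)) / (1 - s)) := by
  have h := (hasSum_laguerreDoubleTerm (-x) hs).sum_antidiagonal
  simp only [sum_antidiagonal_laguerreDoubleTerm, neg_neg] at h
  exact h

theorem rhoDiag_nonneg {nβ : ℝ} (hn : 0 ≤ nβ) (α : ℝ) (l : ℕ) : 0 ≤ rhoDiag nβ α l := by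
  have hx : -α ^ 2 / (nβ * (nβ + 1)) ≤ 0 :=
    div_nonpos_of_nonpos_of_nonneg (neg_nonpos.mpr (sq_nonneg α)) (by positivity)
  have := laguerre_nonneg_of_nonpos hx l
  unfold rhoDiag
  positivity

theorem hasSum_rhoDiag_mul_pow {nβ : ℝ} (hn : 0 < nβ) (α : ℝ) {y : ℝ} (hy : |y| < 1 + 1 / nβ) :
    HasSum (fun l => rhoDiag nβ α l * y ^ l)
      (exp (α ^ 2 * (y - 1) / (1 - (y - 1) * nβ)) / (1 - (y - 1) * nβ)) := by
  have hny : nβ * |y| < nβ + 1 := by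
    calc nβ * |y| < nβ * (1 + 1 / nβ) := mul_lt_mul_of_pos_left hy hn
      _ = nβ + 1 := by field_simp
  have hD : 0 < 1 - (y - 1) * nβ := by nlinarith [le_abs_self y]
  have hs : |nβ / (nβ + 1) * y| < 1 := by
    rw [abs_mul, abs_of_pos (by positivity), div_mul_eq_mul_div, div_lt_one (by positivity)]
    exact hny
  have hval : exp (-α ^ 2 / (nβ + 1)) / (nβ + 1) *
      (exp (-(-α ^ 2 / (nβ * (nβ + 1))) * (nβ / (nβ + 1) * y) / (1 - nβ / (nβ + 1) * y)) /
        (1 - nβ / (nβ + 1) * y))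
      = exp (α ^ 2 * (y - 1) / (1 - (y - 1) * nβ)) / (1 - (y - 1) * nβ) := by
    have hsy : 1 - nβ / (nβ + 1) * y = (1 - (y - 1) * nβ) / (nβ + 1) := by
      field_simp
      ring
    have hexponent : α ^ 2 * (y - 1) / (1 - (y - 1) * nβ) = -α ^ 2 / (nβ + 1) +
        -(-α ^ 2 / (nβ * (nβ + 1))) * (nβ / (nβ + 1) * y) / ((1 - (y - 1) * nβ) / (nβ + 1)) := by
      field_simp
      ring
    rw [hsy, hexponent, exp_add]
    field_simp
  have h := (hasSum_laguerre_mul_pow (-α ^ 2 / (nβ * (nβ + 1))) hs).mul_left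
    (exp (-α ^ 2 / (nβ + 1)) / (nβ + 1))
  rw [hval] at h
  refine h.congr_fun fun l => ?_
  rw [rhoDiag, mul_pow]
  ring

theorem tsum_ite_le_exp_neg_mul_of_hasSum {p : ℕ → ℝ} (hp : ∀ l, 0 ≤ p l) {t M : ℝ} (ht : 0 ≤ t)
    (hM : HasSum (fun l => p l * exp (t * l)) M) (T : ℝ) :
    ∑' l : ℕ, (if T ≤ (l : ℝ) then p l else 0) ≤ exp (-(t * T)) * M := by
  have hle : ∀ l : ℕ, (if T ≤ (l : ℝ) then p l else 0) ≤ exp (-(t * T)) * (p l * exp (t * l)) := by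
    intro l
    split_ifs with hl
    · calc p l = p l * 1 := (mul_one _).symm
        _ ≤ p l * exp (t * (l - T)) :=
          mul_le_mul_of_nonneg_left (one_le_exp (mul_nonneg ht (sub_nonneg.mpr hl))) (hp l)
        _ = exp (-(t * T)) * (p l * exp (t * l)) := by
          rw [mul_sub, sub_eq_neg_add, exp_add]
          ring
    · exact mul_nonneg (exp_pos _).le (mul_nonneg (hp l) (exp_pos _).le)
  have hsum : Summable fun l : ℕ => if T ≤ (l : ℝ) then p l else 0 :=
    (hM.mul_left _).summable.of_nonneg_of_le (fun l => ite_nonneg (hp l) le_rfl) hle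
  exact hasSum_le hle hsum.hasSum (hM.mul_left _)

theorem tsum_rhoDiag_tail_le {nβ : ℝ} (hn : 0 < nβ) {α : ℝ} (hα : 0 < α) (T : ℝ) :
    ∑' l : ℕ, (if T ≤ (l : ℝ) then rhoDiag nβ α l else 0)
      ≤ ((α + nβ) / α) * exp (α - T * log (1 + 1 / (α + nβ))) := by
  set y := 1 + 1 / (α + nβ) with hy_def
  have hαn : 0 < α + nβ := by linarith
  have hy0 : 0 < y := by positivity
  have hy1 : 1 ≤ y := le_add_of_nonneg_right (by positivity)
  have hy : |y| < 1 + 1 / nβ := by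
    rw [abs_of_pos hy0, hy_def]
    gcongr
    linarith
  have hMGF : HasSum (fun l => rhoDiag nβ α l * exp (log y * l)) ((α + nβ) / α * exp α) := by
    have h := hasSum_rhoDiag_mul_pow hn α hy
    have hD : 1 - (y - 1) * nβ = α / (α + nβ) := by
      rw [hy_def]
      field_simp
      ring
    have hexponent : α ^ 2 * (y - 1) / (α / (α + nβ)) = α := by
      rw [hy_def]
      field_simp
      ring
    rw [hD, hexponent, div_div_eq_mul_div, mul_comm, mul_div_right_comm] at h
    refine h.congr_fun fun l => ?_
    rw [← rpow_natCast, rpow_def_of_pos hy0]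
  calc _ ≤ exp (-(log y * T)) * ((α + nβ) / α * exp α) :=
        tsum_ite_le_exp_neg_mul_of_hasSum (rhoDiag_nonneg hn.le α) (log_nonneg hy1) hMGF T
    _ = ((α + nβ) / α) * exp (α - T * log y) := by
        rw [mul_left_comm, ← exp_add]
        ring_nf

theorem tendsto_sub_sq_mul_log_one_add_inv :
    Tendsto (fun u : ℝ => u - u ^ 2 * log (1 + 1 / u)) atTop (𝓝 (1 / 2)) := by
  rw [← tendsto_sub_nhds_zero_iff]
  refine squeeze_zero_norm' ?_ (tendsto_inv_atTop_zero.comp (tendsto_atTop_add_const_right _ (-1)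
    tendsto_id))
  filter_upwards [eventually_ge_atTop (2 : ℝ)] with u hu
  have hu0 : 0 < u := by linarith
  have hu1 : u - 1 ≠ 0 := by linarith
  have htaylor : |log (1 + 1 / u) - 1 / u + 1 / (2 * u ^ 2)| ≤ 1 / (u ^ 2 * (u - 1)) := by
    have hv : |-(1 / u)| < 1 := by
      rw [abs_neg, abs_of_pos (by positivity), div_lt_one hu0]
      linarith
    convert abs_log_sub_add_sum_range_le hv 2 using 1
    · simp only [sum_range_succ, sum_range_zero, sub_neg_eq_add]
      push_cast
      ring_nf
    · rw [abs_neg, abs_of_pos (by positivity), one_div_pow]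
      field_simp
  have hexpand : u - u ^ 2 * log (1 + 1 / u) - 1 / 2
      = -(u ^ 2 * (log (1 + 1 / u) - 1 / u + 1 / (2 * u ^ 2))) := by
    field_simp
    ring
  rw [Function.comp_apply, id, norm_eq_abs, hexpand, abs_neg, abs_mul, abs_of_pos (by positivity)]
  calc _ ≤ u ^ 2 * (1 / (u ^ 2 * (u - 1))) := by gcongr
    _ = (u + -1)⁻¹ := by
        rw [← sub_eq_add_neg]
        field_simp

theorem tendsto_sub_sq_add_mul_mul_log_one_add_inv (n b : ℝ) :
    Tendsto (fun α : ℝ => α - (α ^ 2 + b * α) * log (1 + 1 / (α + n))) atTop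
      (𝓝 (n + 1 / 2 - b)) := by
  have hlog : Tendsto (fun u : ℝ => log (1 + 1 / u)) atTop (𝓝 0) := by
    have h : Tendsto (fun u : ℝ => 1 + 1 / u) atTop (𝓝 (1 + 0)) := by
      simpa only [one_div] using tendsto_const_nhds.add tendsto_inv_atTop_zero
    simpa [Function.comp_def] using (continuousAt_log (by norm_num)).tendsto.comp h
  have hmul : Tendsto (fun u : ℝ => u * log (1 + 1 / u)) atTop (𝓝 1) := by
    simpa using tendsto_mul_log_one_add_div_atTop 1
  -- in terms of `u = α + n`, the exponent is a combination of the three limits above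
  have hu := (((tendsto_sub_sq_mul_log_one_add_inv.sub_const n).add (hmul.const_mul (2 * n - b))).sub
    (hlog.const_mul (n ^ 2 - b * n))).comp (tendsto_atTop_add_const_right _ n tendsto_id)
  convert hu using 1
  · funext α
    simp only [Function.comp_apply, id]
    ring
  · ring_nf

theorem tendsto_chernoff_bound (n b : ℝ) :
    Tendsto (fun α : ℝ => (α + n) / α * exp (α - (α ^ 2 + b * α) * log (1 + 1 / (α + n))))
      atTop (𝓝 (exp (n + 1 / 2 - b))) := by
  have hratio : Tendsto (fun α : ℝ => (α + n) / α) atTop (𝓝 1) := by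
    have h : Tendsto (fun α : ℝ => 1 + n / α) atTop (𝓝 (1 + 0)) :=
      tendsto_const_nhds.add (tendsto_const_nhds.div_atTop tendsto_id)
    rw [add_zero] at h
    refine h.congr' ?_
    filter_upwards [eventually_ne_atTop 0] with α hα
    field_simp
  simpa using hratio.mul ((continuous_exp.tendsto _).comp
    (tendsto_sub_sq_add_mul_mul_log_one_add_inv n b))

/-- Chernoff-type tail bound for the energy distribution of a coherent thermal
state: with `t' = log(1 + 1/(α+n_β))`,
`Σ_{l≥T} ρ_{l,l} ≤ e^{-t'T} M(t') = ((α+n_β)/α) exp[α - T log(1+1/(α+n_β))]`; in particular for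
`T = α² + R√(1+2n_β)α` the right tail weight is `O(exp(n_β + 1/2 - √(1+2n_β)R))` as `α → ∞`. -/
theorem coherent_thermal_chernoff (nβ : ℝ) (hn : 0 < nβ) :
    (∀ α : ℝ, 0 < α → ∀ T : ℝ, 0 ≤ T →
      ∑' l : ℕ, (if T ≤ (l : ℝ) then rhoDiag nβ α l else 0)
        ≤ ((α + nβ) / α) * Real.exp (α - T * Real.log (1 + 1 / (α + nβ))))
    ∧ ∀ R : ℝ, 0 < R →
        (fun α : ℝ => ∑' l : ℕ,
            (if α ^ 2 + R * Real.sqrt (1 + 2 * nβ) * α ≤ (l : ℝ) then rhoDiag nβ α l else 0))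
          =O[atTop]
          (fun _ : ℝ => Real.exp (nβ + 1 / 2 - Real.sqrt (1 + 2 * nβ) * R)) := by
  refine ⟨fun α hα T _ => tsum_rhoDiag_tail_le hn hα T, fun R _ => ?_⟩
  set b := R * Real.sqrt (1 + 2 * nβ)
  have htail : (fun α : ℝ => ∑' l : ℕ,
      (if α ^ 2 + b * α ≤ (l : ℝ) then rhoDiag nβ α l else 0)) =O[atTop]
      fun α => (α + nβ) / α * exp (α - (α ^ 2 + b * α) * log (1 + 1 / (α + nβ))) := by
    refine IsBigO.of_norm_eventuallyLE ?_
    filter_upwards [eventually_gt_atTop 0] with α hα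
    rw [norm_of_nonneg (tsum_nonneg fun l => ite_nonneg (rhoDiag_nonneg hn.le α l) le_rfl)]
    exact tsum_rhoDiag_tail_le hn hα _
  exact htail.trans (((tendsto_chernoff_bound nβ b).isBigO_one ℝ).trans
    (isBigO_const_const _ (exp_pos _).ne' _))
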